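/- For every integer m ≥ 0, the map φ_{3+2m} on the 7-edge bipartite graph P₇ defined by a ↦ aG(aB)^m a, b ↦ bD(bC)^m b, c ↦ cF(cA)^m c, d ↦ aB(aB)^m a, e ↦ cB(aB)^m a, f ↦ aC(aB)^m a, g ↦ bE(bA)^m b induces an automorphism of the free group F₆ = π₁(P₇) (i.e., φ_{3+2m} is a homotopy equivalence). -/

import Mathlib

/-- `π₁(P₇, v₀)` is free of rank 6 on the loops `x_b = aB, x_c = aC, x_d = aD,
x_e = aE, x_f = aF, x_g = aG` (indexed `0,...,5`). The prototype map
`φ_{3+2m} : a ↦ aG(aB)^m a, b ↦ bD(bC)^m b, c ↦ cF(cA)^m c, d ↦ aB(aB)^m a,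
e ↦ cB(aB)^m a, f ↦ aC(aB)^m a, g ↦ bE(bA)^m b` fixes both vertices, and the
endomorphism it induces on `π₁(P₇) ≅ F₆` sends `x_y = φ(a)·φ(y)⁻¹`, computed
in the generators via `φ(a) = W_a·a`, `φ(b) = W_b·b`, `φ(c) = W_c·c`,
`φ(d) = W_d·a`, `φ(e) = W_e·a`, `φ(f) = W_f·a`, `φ(g) = W_g·b` with
`W_a = x_g x_b^m`, `W_b = x_b⁻¹ x_d (x_b⁻¹ x_c)^m`, `W_c = x_c⁻¹ x_f x_c⁻ᵐ`,
`W_d = x_b^{m+1}`, `W_e = x_c⁻¹ x_b^{m+1}`, `W_f = x_c x_b^m`,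
`W_g = x_b⁻¹ x_e x_b⁻ᵐ`. -/
def prototypeInduced (m : ℕ) : FreeGroup (Fin 6) →* FreeGroup (Fin 6) :=
  FreeGroup.lift
    (fun i : Fin 6 =>
      let x : Fin 6 → FreeGroup (Fin 6) := FreeGroup.of
      let Wa := x 5 * (x 0) ^ m
      let Wb := (x 0)⁻¹ * x 2 * ((x 0)⁻¹ * x 1) ^ m
      let Wc := (x 1)⁻¹ * x 4 * ((x 1)⁻¹) ^ m
      let Wd := (x 0) ^ (m + 1)
      let We := (x 1)⁻¹ * (x 0) ^ (m + 1)
      let Wf := x 1 * (x 0) ^ m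
      let Wg := (x 0)⁻¹ * x 3 * ((x 0)⁻¹) ^ m
      ![Wa * x 0 * Wb⁻¹,
        Wa * x 1 * Wc⁻¹,
        Wa * Wd⁻¹,
        Wa * We⁻¹,
        Wa * Wf⁻¹,
        Wa * x 0 * Wg⁻¹] i)

/-! The images of `x_d, x_e, x_f` are `x_g x_b⁻¹, x_g x_b⁻¹ x_c, x_g x_c⁻¹`, from which
`x_b, x_c, x_g` are recovered; the images of `x_b, x_c, x_g` then contain `x_d⁻¹, x_f⁻¹, x_e⁻¹`
exactly once each, so they can be solved for `x_d, x_f, x_e`. This gives an explicit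
two-sided inverse. -/

namespace Prototype

def xb : FreeGroup (Fin 6) := .of 0
def xc : FreeGroup (Fin 6) := .of 1
def xd : FreeGroup (Fin 6) := .of 2
def xe : FreeGroup (Fin 6) := .of 3
def xf : FreeGroup (Fin 6) := .of 4
def xg : FreeGroup (Fin 6) := .of 5

theorem hom_ext {M : Type*} [Monoid M] {f g : FreeGroup (Fin 6) →* M}
    (hb : f xb = g xb) (hc : f xc = g xc) (hd : f xd = g xd)
    (he : f xe = g xe) (hf : f xf = g xf) (hg : f xg = g xg) : f = g :=
  FreeGroup.ext_hom f g fun i => by fin_cases i <;> assumption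

variable (m : ℕ)

lemma prototypeInduced_xb :
    prototypeInduced m xb = xg * xb ^ (m + 1) * (xc⁻¹ * xb) ^ m * xd⁻¹ * xb := by
  simp only [prototypeInduced, FreeGroup.lift_apply_of, xb, xc, xd, xg]
  dsimp only [Matrix.cons_val]
  rw [mul_inv_rev, ← inv_pow, mul_inv_rev, inv_inv]
  group

lemma prototypeInduced_xc :
    prototypeInduced m xc = xg * xb ^ m * xc ^ (m + 1) * xf⁻¹ * xc := by
  simp only [prototypeInduced, FreeGroup.lift_apply_of, xb, xc, xf, xg]
  dsimp only [Matrix.cons_val]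
  group

lemma prototypeInduced_xd : prototypeInduced m xd = xg * xb⁻¹ := by
  simp only [prototypeInduced, FreeGroup.lift_apply_of, xb, xd, xg]
  dsimp only [Matrix.cons_val]
  group

lemma prototypeInduced_xe : prototypeInduced m xe = xg * xb⁻¹ * xc := by
  simp only [prototypeInduced, FreeGroup.lift_apply_of, xb, xc, xe, xg]
  dsimp only [Matrix.cons_val]
  group

lemma prototypeInduced_xf : prototypeInduced m xf = xg * xc⁻¹ := by
  simp only [prototypeInduced, FreeGroup.lift_apply_of, xc, xf, xg]
  dsimp only [Matrix.cons_val]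
  group

lemma prototypeInduced_xg : prototypeInduced m xg = xg * xb ^ (2 * m + 1) * xe⁻¹ * xb := by
  simp only [prototypeInduced, FreeGroup.lift_apply_of, xb, xe, xg]
  dsimp only [Matrix.cons_val]
  group

def yg : FreeGroup (Fin 6) := xf * xd⁻¹ * xe
def yb : FreeGroup (Fin 6) := xd⁻¹ * yg
def yc : FreeGroup (Fin 6) := xd⁻¹ * xe

lemma prototypeInduced_yg : prototypeInduced m yg = xg := by
  simp only [yg, map_mul, map_inv, prototypeInduced_xd, prototypeInduced_xe, prototypeInduced_xf]
  group

lemma prototypeInduced_yb : prototypeInduced m yb = xb := by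
  simp only [yb, map_mul, map_inv, prototypeInduced_yg, prototypeInduced_xd]
  group

lemma prototypeInduced_yc : prototypeInduced m yc = xc := by
  simp only [yc, map_mul, map_inv, prototypeInduced_xd, prototypeInduced_xe]
  group

lemma yg_mul_yb_inv : yg * yb⁻¹ = xd := by
  simp only [yb]
  group

lemma xd_mul_yc : xd * yc = xe := mul_inv_cancel_left xd xe

lemma yg_mul_yc_inv : yg * yc⁻¹ = xf := by
  simp only [yg, yc]
  group

def prototypeInverse : FreeGroup (Fin 6) →* FreeGroup (Fin 6) :=
  FreeGroup.lift ![yb, yc, yb * xb⁻¹ * yg * yb ^ (m + 1) * (yc⁻¹ * yb) ^ m,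
    yb * xg⁻¹ * yg * yb ^ (2 * m + 1), yc * xc⁻¹ * yg * yb ^ m * yc ^ (m + 1), yg]

lemma prototypeInverse_xb : prototypeInverse m xb = yb := FreeGroup.lift_apply_of

lemma prototypeInverse_xc : prototypeInverse m xc = yc := FreeGroup.lift_apply_of

lemma prototypeInverse_xd :
    prototypeInverse m xd = yb * xb⁻¹ * yg * yb ^ (m + 1) * (yc⁻¹ * yb) ^ m :=
  FreeGroup.lift_apply_of

lemma prototypeInverse_xe : prototypeInverse m xe = yb * xg⁻¹ * yg * yb ^ (2 * m + 1) :=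
  FreeGroup.lift_apply_of

lemma prototypeInverse_xf :
    prototypeInverse m xf = yc * xc⁻¹ * yg * yb ^ m * yc ^ (m + 1) :=
  FreeGroup.lift_apply_of

lemma prototypeInverse_xg : prototypeInverse m xg = yg := FreeGroup.lift_apply_of

theorem prototypeInduced_comp_prototypeInverse :
    (prototypeInduced m).comp (prototypeInverse m) = MonoidHom.id _ := by
  apply hom_ext <;>
  simp only [MonoidHom.comp_apply, MonoidHom.id_apply, prototypeInverse_xb, prototypeInverse_xc,
    prototypeInverse_xd, prototypeInverse_xe, prototypeInverse_xf, prototypeInverse_xg, map_mul,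
    map_inv, map_pow, prototypeInduced_yb, prototypeInduced_yc, prototypeInduced_yg,
    prototypeInduced_xb, prototypeInduced_xc, prototypeInduced_xg] <;>
  group

theorem prototypeInverse_comp_prototypeInduced :
    (prototypeInverse m).comp (prototypeInduced m) = MonoidHom.id _ := by
  apply hom_ext <;>
  simp only [MonoidHom.comp_apply, MonoidHom.id_apply, prototypeInduced_xb, prototypeInduced_xc,
    prototypeInduced_xd, prototypeInduced_xe, prototypeInduced_xf, prototypeInduced_xg, map_mul,
    map_inv, map_pow, prototypeInverse_xb, prototypeInverse_xc, prototypeInverse_xd,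
    prototypeInverse_xe, prototypeInverse_xf, prototypeInverse_xg, yg_mul_yb_inv, xd_mul_yc,
    yg_mul_yc_inv] <;>
  group

end Prototype

/-- For every `m ≥ 0`, the prototype map `φ_{3+2m}` is a homotopy equivalence
of `P₇`: the induced endomorphism of `π₁(P₇) ≅ F₆` is an automorphism. -/
theorem prototype_induces_automorphism (m : ℕ) :
    Function.Bijective (prototypeInduced m) :=
  (MonoidHom.toMulEquiv _ _ (Prototype.prototypeInverse_comp_prototypeInduced m)
    (Prototype.prototypeInduced_comp_prototypeInverse m)).bijective
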